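/- Consider an MM-XSTPIR scheme with N servers, K messages, security level X, privacy level T, and retrieval-set size M, where X < N ≤ X + T and 1 ≤ M ≤ K. Then Σ_{n=1}^{N} D_n ≥ (N/(N − X)) · K · ℓ. In particular, the retrieval rate Mℓ / Σ_n D_n is at most M(N − X)/(K·N). -/

import Mathlib

open scoped BigOperators Classical

noncomputable section

namespace SDMM

variable {Ω : Type} [Fintype Ω]

/-- The probability that the random variable `X` (on finite sample space `Ω`
with probability mass function `p`) takes the value `a`. -/
def distOf (p : Ω → ℝ) {α : Type*} (X : Ω → α) (a : α) : ℝ :=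
  ∑ ω, if X ω = a then p ω else 0

/-- `p` is a probability mass function on `Ω`. -/
def IsPMF (p : Ω → ℝ) : Prop := (∀ ω, 0 ≤ p ω) ∧ ∑ ω, p ω = 1

/-- Shannon entropy (natural-log units) of the random variable `X`. -/
def H (p : Ω → ℝ) {α : Type*} [Fintype α] (X : Ω → α) : ℝ :=
  ∑ a, Real.negMulLog (distOf p X a)

/-- Conditional Shannon entropy `H(X | Y) = H(X, Y) - H(Y)`. -/
def Hc (p : Ω → ℝ) {α β : Type*} [Fintype α] [Fintype β] (X : Ω → α) (Y : Ω → β) : ℝ :=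
  H p (fun ω => (X ω, Y ω)) - H p Y

/-- Mutual information `I(X ; Y) = H(X) + H(Y) - H(X, Y)`. -/
def MI (p : Ω → ℝ) {α β : Type*} [Fintype α] [Fintype β] (X : Ω → α) (Y : Ω → β) : ℝ :=
  H p X + H p Y - H p (fun ω => (X ω, Y ω))

/-- Conditional mutual information `I(X ; Y | Z)`. -/
def CMI (p : Ω → ℝ) {α β γ : Type*} [Fintype α] [Fintype β] [Fintype γ]
    (X : Ω → α) (Y : Ω → β) (Z : Ω → γ) : ℝ :=
  H p (fun ω => (X ω, Z ω)) + H p (fun ω => (Y ω, Z ω))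
    - H p (fun ω => (X ω, Y ω, Z ω)) - H p Z

/-- `X` is uniformly distributed on `α`. -/
def Uniform (p : Ω → ℝ) {α : Type*} [Fintype α] (X : Ω → α) : Prop :=
  ∀ a, distOf p X a = 1 / Fintype.card α

/-- `X` and `Y` are independent random variables. -/
def IndepRV (p : Ω → ℝ) {α β : Type*} (X : Ω → α) (Y : Ω → β) : Prop :=
  ∀ a b, distOf p (fun ω => (X ω, Y ω)) (a, b) = distOf p X a * distOf p Y b

end SDMM

set_option linter.unusedSectionVars false
set_option linter.unusedVariables false

namespace SDMM

variable {Ω : Type} [Fintype Ω]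
variable {p : Ω → ℝ} {α β γ δ : Type*} [Fintype α] [Fintype β] [Fintype γ] [Fintype δ]

lemma distOf_nonneg (hp : IsPMF p) (X : Ω → α) (a : α) : 0 ≤ distOf p X a :=
  Finset.sum_nonneg fun ω _ => by split <;> simp [hp.1 ω]

lemma sum_distOf (hp : IsPMF p) (X : Ω → α) : ∑ a, distOf p X a = 1 := by
  unfold distOf
  rw [Finset.sum_comm]
  simp only [Finset.sum_ite_eq, Finset.mem_univ, if_true]
  exact hp.2

lemma distOf_le_one (hp : IsPMF p) (X : Ω → α) (a : α) : distOf p X a ≤ 1 := by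
  have := sum_distOf hp X
  calc distOf p X a ≤ ∑ a, distOf p X a :=
        Finset.single_le_sum (fun b _ => distOf_nonneg hp X b) (Finset.mem_univ a)
    _ = 1 := this

lemma distOf_comp' (X : Ω → α) (Y : Ω → β) (f : α → β) (hf : ∀ ω, Y ω = f (X ω)) (b : β) :
    distOf p Y b = ∑ a, if f a = b then distOf p X a else 0 := by
  unfold distOf
  have : ∀ a, (if f a = b then ∑ ω, (if X ω = a then p ω else 0) else 0)
      = ∑ ω, if f a = b then (if X ω = a then p ω else 0) else 0 := by
    intro a; split <;> simp
  simp_rw [this]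
  rw [Finset.sum_comm]
  refine Finset.sum_congr rfl fun ω _ => ?_
  rw [Finset.sum_eq_single (X ω)]
  · simp [hf ω]
  · intro a _ h
    split <;> simp [Ne.symm h]
  · simp

lemma H_congr_dist {X : Ω → α} {Y : Ω → α} (h : ∀ a, distOf p X a = distOf p Y a) :
    H p X = H p Y := by
  unfold H; simp_rw [h]

lemma negMulLog_add_le {x y : ℝ} (hx : 0 ≤ x) (hy : 0 ≤ y) :
    Real.negMulLog (x + y) ≤ Real.negMulLog x + Real.negMulLog y := by
  rcases eq_or_lt_of_le hx with h | hx'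
  · simp [← h]
  rcases eq_or_lt_of_le hy with h | hy'
  · simp [← h]
  have h1 : Real.log x ≤ Real.log (x + y) := Real.log_le_log hx' (by linarith)
  have h2 : Real.log y ≤ Real.log (x + y) := Real.log_le_log hy' (by linarith)
  simp only [Real.negMulLog]
  nlinarith

lemma negMulLog_sum_le {ι : Type*} (s : Finset ι) (f : ι → ℝ) (hf : ∀ i ∈ s, 0 ≤ f i) :
    Real.negMulLog (∑ i ∈ s, f i) ≤ ∑ i ∈ s, Real.negMulLog (f i) := by
  induction s using Finset.cons_induction with
  | empty => simp
  | cons a t ha ih =>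
    rw [Finset.sum_cons, Finset.sum_cons]
    calc Real.negMulLog (f a + ∑ i ∈ t, f i)
        ≤ Real.negMulLog (f a) + Real.negMulLog (∑ i ∈ t, f i) :=
          negMulLog_add_le (hf a (Finset.mem_cons_self a t))
            (Finset.sum_nonneg fun i hi => hf i (Finset.mem_cons_of_mem hi))
      _ ≤ _ := by
          have := ih (fun i hi => hf i (Finset.mem_cons_of_mem hi))
          linarith

lemma H_comp_le' (hp : IsPMF p) (X : Ω → α) (Y : Ω → β) (f : α → β)
    (hf : ∀ ω, Y ω = f (X ω)) : H p Y ≤ H p X := by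
  unfold H
  simp_rw [distOf_comp' X Y f hf]
  have step : ∀ b : β, Real.negMulLog (∑ a, if f a = b then distOf p X a else 0)
      ≤ ∑ a, if f a = b then Real.negMulLog (distOf p X a) else 0 := by
    intro b
    calc Real.negMulLog (∑ a, if f a = b then distOf p X a else 0)
        ≤ ∑ a, Real.negMulLog (if f a = b then distOf p X a else 0) :=
          negMulLog_sum_le _ _ (fun a _ => by split <;> simp [distOf_nonneg hp X a])
      _ = ∑ a, if f a = b then Real.negMulLog (distOf p X a) else 0 := by
          refine Finset.sum_congr rfl fun a _ => ?_
          split <;> simp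
  calc ∑ b, Real.negMulLog (∑ a, if f a = b then distOf p X a else 0)
      ≤ ∑ b, ∑ a, if f a = b then Real.negMulLog (distOf p X a) else 0 :=
        Finset.sum_le_sum fun b _ => step b
    _ = ∑ a, Real.negMulLog (distOf p X a) := by
        rw [Finset.sum_comm]
        simp [Finset.sum_ite_eq]

lemma H_eq' (hp : IsPMF p) (X : Ω → α) (Y : Ω → β) (f : α → β) (g : β → α)
    (hf : ∀ ω, Y ω = f (X ω)) (hg : ∀ ω, X ω = g (Y ω)) : H p X = H p Y :=
  le_antisymm (H_comp_le' hp Y X g hg) (H_comp_le' hp X Y f hf)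

lemma H_nonneg (hp : IsPMF p) (X : Ω → α) : 0 ≤ H p X :=
  Finset.sum_nonneg fun a _ =>
    Real.negMulLog_nonneg (distOf_nonneg hp X a) (distOf_le_one hp X a)


section CMI
variable {Ω : Type} [Fintype Ω] {p : Ω → ℝ} {α β γ : Type*} [Fintype α] [Fintype β] [Fintype γ]

lemma CMI_nonneg (hp : IsPMF p) (X : Ω → α) (Y : Ω → β) (Z : Ω → γ) :
    0 ≤ CMI p X Y Z := by
  classical
  set r : α × β × γ → ℝ := distOf p (fun ω => (X ω, Y ω, Z ω)) with hrdef
  have hr0 : ∀ t, 0 ≤ r t := fun t => distOf_nonneg hp _ t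
  have hrsum : ∑ t, r t = 1 := sum_distOf hp _
  set qXZ : α → γ → ℝ := fun a c => ∑ b, r (a, b, c) with hqXZdef
  set qYZ : β → γ → ℝ := fun b c => ∑ a, r (a, b, c) with hqYZdef
  set qZ : γ → ℝ := fun c => ∑ a, ∑ b, r (a, b, c) with hqZdef
  -- marginal identities for distOf
  have hXZ : ∀ a c, distOf p (fun ω => (X ω, Z ω)) (a, c) = qXZ a c := by
    intro a c
    rw [distOf_comp' (fun ω => (X ω, Y ω, Z ω)) _ (fun t => (t.1, t.2.2)) (fun _ => rfl)]
    rw [Fintype.sum_prod_type]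
    simp only [Fintype.sum_prod_type, Prod.mk.injEq, ite_and]
    rw [Finset.sum_eq_single a]
    · simp [hqXZdef, Finset.sum_ite_eq']; rfl
    · intro a' _ h; simp [h]
    · simp
  have hYZ : ∀ b c, distOf p (fun ω => (Y ω, Z ω)) (b, c) = qYZ b c := by
    intro b c
    rw [distOf_comp' (fun ω => (X ω, Y ω, Z ω)) _ (fun t => (t.2.1, t.2.2)) (fun _ => rfl)]
    simp only [Fintype.sum_prod_type, Prod.mk.injEq, ite_and]
    show _ = ∑ a, r (a, b, c)
    refine Finset.sum_congr rfl fun a _ => ?_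
    rw [Finset.sum_eq_single b]
    · simp [Finset.sum_ite_eq']; rfl
    · intro b' _ h; simp [h]
    · simp
  have hZ : ∀ c, distOf p Z c = qZ c := by
    intro c
    rw [distOf_comp' (fun ω => (X ω, Y ω, Z ω)) _ (fun t => t.2.2) (fun _ => rfl)]
    simp only [Fintype.sum_prod_type]
    simp [hqZdef, Finset.sum_ite_eq']; rfl
  -- entropy expansions
  have hHXZ : H p (fun ω => (X ω, Z ω)) = ∑ a, ∑ b, ∑ c, -(r (a,b,c) * Real.log (qXZ a c)) := by
    unfold H
    rw [Fintype.sum_prod_type]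
    have : ∀ a c, Real.negMulLog (qXZ a c) = ∑ b, -(r (a,b,c) * Real.log (qXZ a c)) := by
      intro a c
      rw [Real.negMulLog, hqXZdef]
      simp only [neg_mul, Finset.sum_neg_distrib]
      rw [Finset.sum_mul]
    calc ∑ a, ∑ c, Real.negMulLog (distOf p (fun ω => (X ω, Z ω)) (a, c))
        = ∑ a, ∑ c, ∑ b, -(r (a,b,c) * Real.log (qXZ a c)) := by
          refine Finset.sum_congr rfl fun a _ => Finset.sum_congr rfl fun c _ => ?_
          rw [hXZ a c, this a c]
      _ = _ := by
          refine Finset.sum_congr rfl fun a _ => ?_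
          exact Finset.sum_comm
  have hHYZ : H p (fun ω => (Y ω, Z ω)) = ∑ a, ∑ b, ∑ c, -(r (a,b,c) * Real.log (qYZ b c)) := by
    unfold H
    rw [Fintype.sum_prod_type]
    have : ∀ b c, Real.negMulLog (qYZ b c) = ∑ a, -(r (a,b,c) * Real.log (qYZ b c)) := by
      intro b c
      rw [Real.negMulLog, hqYZdef]
      simp only [neg_mul, Finset.sum_neg_distrib]
      rw [Finset.sum_mul]
    calc ∑ b, ∑ c, Real.negMulLog (distOf p (fun ω => (Y ω, Z ω)) (b, c))
        = ∑ b, ∑ c, ∑ a, -(r (a,b,c) * Real.log (qYZ b c)) := by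
          refine Finset.sum_congr rfl fun b _ => Finset.sum_congr rfl fun c _ => ?_
          rw [hYZ b c, this b c]
      _ = ∑ b, ∑ a, ∑ c, -(r (a,b,c) * Real.log (qYZ b c)) := by
          refine Finset.sum_congr rfl fun b _ => ?_
          exact Finset.sum_comm
      _ = _ := Finset.sum_comm
  have hHZ : H p Z = ∑ a, ∑ b, ∑ c, -(r (a,b,c) * Real.log (qZ c)) := by
    unfold H
    have : ∀ c, Real.negMulLog (qZ c) = ∑ a, ∑ b, -(r (a,b,c) * Real.log (qZ c)) := by
      intro c
      rw [Real.negMulLog, hqZdef]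
      simp only [neg_mul, Finset.sum_neg_distrib]
      rw [Finset.sum_mul]
      refine congrArg _ (Finset.sum_congr rfl fun a _ => ?_)
      rw [Finset.sum_mul]
    calc ∑ c, Real.negMulLog (distOf p Z c)
        = ∑ c, ∑ a, ∑ b, -(r (a,b,c) * Real.log (qZ c)) := by
          refine Finset.sum_congr rfl fun c _ => ?_
          rw [hZ c, this c]
      _ = ∑ a, ∑ c, ∑ b, -(r (a,b,c) * Real.log (qZ c)) := Finset.sum_comm
      _ = _ := by
          refine Finset.sum_congr rfl fun a _ => ?_
          exact Finset.sum_comm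
  have hHXYZ : H p (fun ω => (X ω, Y ω, Z ω)) = ∑ a, ∑ b, ∑ c, -(r (a,b,c) * Real.log (r (a,b,c))) := by
    unfold H
    rw [Fintype.sum_prod_type]
    simp only [Fintype.sum_prod_type]
    refine Finset.sum_congr rfl fun a _ => Finset.sum_congr rfl fun b _ => Finset.sum_congr rfl fun c _ => ?_
    rw [Real.negMulLog]
    ring
  -- rewrite CMI as a triple sum
  have goalEq : CMI p X Y Z = ∑ a, ∑ b, ∑ c,
      ((-(r (a,b,c) * Real.log (qXZ a c))) + (-(r (a,b,c) * Real.log (qYZ b c)))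
        - (-(r (a,b,c) * Real.log (r (a,b,c)))) - (-(r (a,b,c) * Real.log (qZ c)))) := by
    rw [CMI, hHXZ, hHYZ, hHZ, hHXYZ]
    simp only [Finset.sum_add_distrib, Finset.sum_sub_distrib]
  rw [goalEq]
  have hqXZ0 : ∀ a c, 0 ≤ qXZ a c := fun a c => Finset.sum_nonneg fun b _ => hr0 _
  have hqYZ0 : ∀ b c, 0 ≤ qYZ b c := fun b c => Finset.sum_nonneg fun a _ => hr0 _
  have hqZ0 : ∀ c, 0 ≤ qZ c := fun c => Finset.sum_nonneg fun a _ => hqXZ0 a c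
  have hterm : ∀ a b c, r (a,b,c) - qXZ a c * qYZ b c / qZ c ≤
      (-(r (a,b,c) * Real.log (qXZ a c))) + (-(r (a,b,c) * Real.log (qYZ b c)))
        - (-(r (a,b,c) * Real.log (r (a,b,c)))) - (-(r (a,b,c) * Real.log (qZ c))) := by
    intro a b c
    by_cases hr : r (a,b,c) = 0
    · rw [hr]
      simp only [zero_mul, neg_zero, zero_sub, sub_zero, add_zero]
      have : 0 ≤ qXZ a c * qYZ b c / qZ c :=
        div_nonneg (mul_nonneg (hqXZ0 a c) (hqYZ0 b c)) (hqZ0 c)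
      linarith
    · have hrpos : 0 < r (a,b,c) := lt_of_le_of_ne (hr0 _) (Ne.symm hr)
      have h1 : r (a,b,c) ≤ qXZ a c := Finset.single_le_sum (fun x _ => hr0 (a,x,c)) (Finset.mem_univ b)
      have h2 : r (a,b,c) ≤ qYZ b c := Finset.single_le_sum (fun x _ => hr0 (x,b,c)) (Finset.mem_univ a)
      have h3 : qXZ a c ≤ qZ c := Finset.single_le_sum (fun x _ => hqXZ0 x c) (Finset.mem_univ a)
      have hXZpos : 0 < qXZ a c := lt_of_lt_of_le hrpos h1
      have hYZpos : 0 < qYZ b c := lt_of_lt_of_le hrpos h2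
      have hZpos : 0 < qZ c := lt_of_lt_of_le hXZpos h3
      set u : ℝ := qXZ a c * qYZ b c / (r (a,b,c) * qZ c) with hudef
      have hu : 0 < u := by positivity
      have hlog : Real.log u ≤ u - 1 := Real.log_le_sub_one_of_pos hu
      have hlogu : Real.log u = Real.log (qXZ a c) + Real.log (qYZ b c)
          - Real.log (r (a,b,c)) - Real.log (qZ c) := by
        rw [hudef, Real.log_div (by positivity) (by positivity),
          Real.log_mul (ne_of_gt hXZpos) (ne_of_gt hYZpos),
          Real.log_mul hr (ne_of_gt hZpos)]
        ring
      have hru : r (a,b,c) * u = qXZ a c * qYZ b c / qZ c := by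
        rw [hudef]; field_simp
      have hmul : r (a,b,c) * Real.log u ≤ r (a,b,c) * (u - 1) :=
        mul_le_mul_of_nonneg_left hlog (hr0 _)
      rw [hlogu] at hmul
      rw [← hru]
      nlinarith [hmul]
  have h1sum : ∑ a, ∑ b, ∑ c, r (a,b,c) = 1 := by
    rw [← hrsum, Fintype.sum_prod_type]
    refine Finset.sum_congr rfl fun a _ => ?_
    rw [Fintype.sum_prod_type]
  have hZsum1 : ∑ c, qZ c = 1 := by
    rw [← h1sum]
    calc ∑ c, qZ c = ∑ c, ∑ a, ∑ b, r (a,b,c) := rfl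
      _ = ∑ a, ∑ c, ∑ b, r (a,b,c) := Finset.sum_comm
      _ = ∑ a, ∑ b, ∑ c, r (a,b,c) := Finset.sum_congr rfl fun a _ => Finset.sum_comm
  have h2sum : ∑ a, ∑ b, ∑ c, qXZ a c * qYZ b c / qZ c ≤ 1 := by
    have reorder : ∑ a, ∑ b, ∑ c, qXZ a c * qYZ b c / qZ c
        = ∑ c, ∑ a, ∑ b, qXZ a c * qYZ b c / qZ c := by
      calc ∑ a, ∑ b, ∑ c, qXZ a c * qYZ b c / qZ c
          = ∑ a, ∑ c, ∑ b, qXZ a c * qYZ b c / qZ c :=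
            Finset.sum_congr rfl fun a _ => Finset.sum_comm
        _ = ∑ c, ∑ a, ∑ b, qXZ a c * qYZ b c / qZ c := Finset.sum_comm
    have hcsum : ∀ c, ∑ a, ∑ b, qXZ a c * qYZ b c / qZ c ≤ qZ c := by
      intro c
      have e1 : ∑ a, ∑ b, qXZ a c * qYZ b c / qZ c = (∑ a, qXZ a c) * (∑ b, qYZ b c) / qZ c := by
        rw [Finset.sum_mul_sum, Finset.sum_div]
        refine Finset.sum_congr rfl fun a _ => ?_
        rw [Finset.sum_div]
      have e2 : ∑ a, qXZ a c = qZ c := rfl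
      have e3 : ∑ b, qYZ b c = qZ c := Finset.sum_comm
      rw [e1, e2, e3]
      rcases eq_or_lt_of_le (hqZ0 c) with h | h
      · rw [← h]; simp
      · have : qZ c * qZ c / qZ c = qZ c := by field_simp
        rw [this]
    calc ∑ a, ∑ b, ∑ c, qXZ a c * qYZ b c / qZ c
        = ∑ c, ∑ a, ∑ b, qXZ a c * qYZ b c / qZ c := reorder
      _ ≤ ∑ c, qZ c := Finset.sum_le_sum fun c _ => hcsum c
      _ = 1 := hZsum1
  have lower : ∑ a, ∑ b, ∑ c, (r (a,b,c) - qXZ a c * qYZ b c / qZ c)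
      ≤ ∑ a, ∑ b, ∑ c,
      ((-(r (a,b,c) * Real.log (qXZ a c))) + (-(r (a,b,c) * Real.log (qYZ b c)))
        - (-(r (a,b,c) * Real.log (r (a,b,c)))) - (-(r (a,b,c) * Real.log (qZ c)))) :=
    Finset.sum_le_sum fun a _ => Finset.sum_le_sum fun b _ =>
      Finset.sum_le_sum fun c _ => hterm a b c
  have expand2 : ∑ a, ∑ b, ∑ c, (r (a,b,c) - qXZ a c * qYZ b c / qZ c)
      = (∑ a, ∑ b, ∑ c, r (a,b,c)) - ∑ a, ∑ b, ∑ c, qXZ a c * qYZ b c / qZ c := by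
    simp only [Finset.sum_sub_distrib]
  rw [expand2, h1sum] at lower
  linarith

end CMI

section Toolkit
variable {Ω : Type} [Fintype Ω] {p : Ω → ℝ}
variable {α β γ δ ε : Type*} [Fintype α] [Fintype β] [Fintype γ] [Fintype δ] [Fintype ε]

/-- `X` is (pointwise) a function of `Y`. -/
def FnOf {α β : Type*} (X : Ω → α) (Y : Ω → β) : Prop := ∃ f : β → α, ∀ ω, X ω = f (Y ω)

lemma FnOf.comp {X : Ω → α} {Y : Ω → β} {Z : Ω → γ} (h1 : FnOf X Y) (h2 : FnOf Y Z) :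
    FnOf X Z := by
  obtain ⟨f, hf⟩ := h1; obtain ⟨g, hg⟩ := h2
  exact ⟨f ∘ g, fun ω => by simp [hf ω, hg ω]⟩

lemma FnOf.pair_left {X : Ω → α} {Y : Ω → β} {Z : Ω → γ} (h1 : FnOf X Z) (h2 : FnOf Y Z) :
    FnOf (fun ω => (X ω, Y ω)) Z := by
  obtain ⟨f, hf⟩ := h1; obtain ⟨g, hg⟩ := h2
  exact ⟨fun z => (f z, g z), fun ω => by simp [hf ω, hg ω]⟩

lemma FnOf.fst {X : Ω → α} {Y : Ω → β} : FnOf X (fun ω => (X ω, Y ω)) :=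
  ⟨Prod.fst, fun ω => rfl⟩

lemma FnOf.snd {X : Ω → α} {Y : Ω → β} : FnOf Y (fun ω => (X ω, Y ω)) :=
  ⟨Prod.snd, fun ω => rfl⟩

lemma FnOf.refl (X : Ω → α) : FnOf X X := ⟨id, fun _ => rfl⟩

lemma H_mono (hp : IsPMF p) {X : Ω → α} {Y : Ω → β} (h : FnOf X Y) : H p X ≤ H p Y := by
  obtain ⟨f, hf⟩ := h
  exact H_comp_le' hp Y X f hf

lemma H_congr_fn (hp : IsPMF p) {X : Ω → α} {Y : Ω → β} (h1 : FnOf X Y) (h2 : FnOf Y X) :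
    H p X = H p Y :=
  le_antisymm (H_mono hp h1) (H_mono hp h2)

lemma Hc_nonneg (hp : IsPMF p) (X : Ω → α) (Y : Ω → β) : 0 ≤ Hc p X Y := by
  have := H_mono hp (FnOf.snd (X := X) (Y := Y))
  unfold Hc; linarith

lemma H_of_subsingleton (hp : IsPMF p) [Subsingleton α] (X : Ω → α) : H p X = 0 := by
  unfold H
  rcases isEmpty_or_nonempty α with h | h
  · simp
  · have : ∀ a, distOf p X a = 1 := by
      intro a
      unfold distOf
      have : ∀ ω, X ω = a := fun ω => Subsingleton.elim _ _
      simp only [this, if_true]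
      exact hp.2
    simp only [this, Real.negMulLog_one, Finset.sum_const, smul_zero]

lemma Hc_unit (hp : IsPMF p) (X : Ω → α) : Hc p X (fun _ => (() : Unit)) = H p X := by
  unfold Hc
  rw [H_of_subsingleton hp (fun _ => (() : Unit))]
  rw [H_congr_fn hp (X := fun ω => (X ω, ())) (Y := X) ⟨fun a => (a, ()), fun _ => rfl⟩
      ⟨Prod.fst, fun _ => rfl⟩]
  ring

lemma MI_nonneg (hp : IsPMF p) (X : Ω → α) (Y : Ω → β) : 0 ≤ MI p X Y := by
  have h := CMI_nonneg hp X Y (fun _ => (() : Unit))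
  unfold CMI at h
  unfold MI
  have e1 : H p (fun ω => (X ω, ())) = H p X :=
    H_congr_fn hp ⟨fun a => (a, ()), fun _ => rfl⟩ ⟨Prod.fst, fun _ => rfl⟩
  have e2 : H p (fun ω => (Y ω, ())) = H p Y :=
    H_congr_fn hp ⟨fun a => (a, ()), fun _ => rfl⟩ ⟨Prod.fst, fun _ => rfl⟩
  have e3 : H p (fun ω => (X ω, Y ω, ())) = H p (fun ω => (X ω, Y ω)) :=
    H_congr_fn hp ⟨fun t => (t.1, t.2, ()), fun _ => rfl⟩ ⟨fun t => (t.1, t.2.1), fun _ => rfl⟩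
  have e4 : H p (fun _ : Ω => (() : Unit)) = 0 := H_of_subsingleton hp _
  rw [e1, e2, e3, e4] at h
  linarith

lemma Hc_le_H (hp : IsPMF p) (X : Ω → α) (Y : Ω → β) : Hc p X Y ≤ H p X := by
  have := MI_nonneg hp X Y
  unfold MI at this; unfold Hc; linarith

lemma MI_eq (X : Ω → α) (Y : Ω → β) : MI p X Y = H p X - Hc p X Y := by
  unfold MI Hc; ring

lemma MI_symm (hp : IsPMF p) (X : Ω → α) (Y : Ω → β) : MI p X Y = MI p Y X := by
  unfold MI
  rw [H_congr_fn hp (X := fun ω => (X ω, Y ω)) (Y := fun ω => (Y ω, X ω))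
    ⟨fun t => (t.2, t.1), fun _ => rfl⟩ ⟨fun t => (t.2, t.1), fun _ => rfl⟩]
  ring

/-- `CMI p X Z Y = I(X ; Z | Y) = H(X|Y) - H(X|Z,Y)`. -/
lemma CMI_eq (X : Ω → α) (Z : Ω → β) (Y : Ω → γ) :
    CMI p X Z Y = Hc p X Y - Hc p X (fun ω => (Z ω, Y ω)) := by
  unfold CMI Hc; dsimp only; ring

lemma CMI_symm (hp : IsPMF p) (X : Ω → α) (Z : Ω → β) (Y : Ω → γ) :
    CMI p X Z Y = CMI p Z X Y := by
  unfold CMI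
  rw [H_congr_fn hp (X := fun ω => (X ω, Z ω, Y ω)) (Y := fun ω => (Z ω, X ω, Y ω))
    ⟨fun t => (t.2.1, t.1, t.2.2), fun _ => rfl⟩ ⟨fun t => (t.2.1, t.1, t.2.2), fun _ => rfl⟩]
  ring

lemma Hc_cond_pair_le (hp : IsPMF p) (X : Ω → α) (Z : Ω → β) (Y : Ω → γ) :
    Hc p X (fun ω => (Z ω, Y ω)) ≤ Hc p X Y := by
  have := CMI_nonneg hp X Z Y
  rw [CMI_eq] at this
  linarith

lemma Hc_mono_cond (hp : IsPMF p) {Y : Ω → β} {Y' : Ω → γ} (X : Ω → α) (h : FnOf Y' Y) :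
    Hc p X Y ≤ Hc p X Y' := by
  obtain ⟨f, hf⟩ := h
  have h1 : Hc p X (fun ω => (Y ω, Y' ω)) ≤ Hc p X Y' := Hc_cond_pair_le hp X Y Y'
  have h2 : Hc p X (fun ω => (Y ω, Y' ω)) = Hc p X Y := by
    unfold Hc
    rw [H_congr_fn hp (X := fun ω => (X ω, Y ω, Y' ω)) (Y := fun ω => (X ω, Y ω))
        ⟨fun t => (t.1, t.2, f t.2), fun ω => by simp [hf ω]⟩
        ⟨fun t => (t.1, t.2.1), fun _ => rfl⟩,
      H_congr_fn hp (X := fun ω => (Y ω, Y' ω)) (Y := Y)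
        ⟨fun y => (y, f y), fun ω => by simp [hf ω]⟩ ⟨Prod.fst, fun _ => rfl⟩]
  linarith

lemma Hc_mono_left (hp : IsPMF p) {X : Ω → α} {X' : Ω → β} (Y : Ω → γ) (h : FnOf X X') :
    Hc p X Y ≤ Hc p X' Y := by
  obtain ⟨f, hf⟩ := h
  unfold Hc
  have : H p (fun ω => (X ω, Y ω)) ≤ H p (fun ω => (X' ω, Y ω)) :=
    H_mono hp ⟨fun t => (f t.1, t.2), fun ω => by simp [hf ω]⟩
  linarith

lemma Hc_congr_left (hp : IsPMF p) {X : Ω → α} {X' : Ω → β} (Y : Ω → γ)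
    (h1 : FnOf X X') (h2 : FnOf X' X) : Hc p X Y = Hc p X' Y :=
  le_antisymm (Hc_mono_left hp Y h1) (Hc_mono_left hp Y h2)

lemma Hc_congr_cond (hp : IsPMF p) (X : Ω → α) {Y : Ω → β} {Y' : Ω → γ}
    (h1 : FnOf Y Y') (h2 : FnOf Y' Y) : Hc p X Y = Hc p X Y' :=
  le_antisymm (Hc_mono_cond hp X h2) (Hc_mono_cond hp X h1)

lemma Hc_self_zero (hp : IsPMF p) {X : Ω → α} {Y : Ω → β} (h : FnOf X Y) : Hc p X Y = 0 := by
  obtain ⟨f, hf⟩ := h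
  unfold Hc
  rw [H_congr_fn hp (X := fun ω => (X ω, Y ω)) (Y := Y)
    ⟨fun y => (f y, y), fun ω => by simp [hf ω]⟩ ⟨Prod.snd, fun _ => rfl⟩]
  ring

lemma Hc_chain (hp : IsPMF p) (X : Ω → α) (Y : Ω → β) (Z : Ω → γ) :
    Hc p (fun ω => (X ω, Y ω)) Z = Hc p X (fun ω => (Y ω, Z ω)) + Hc p Y Z := by
  unfold Hc
  rw [H_congr_fn hp (X := fun ω => ((X ω, Y ω), Z ω)) (Y := fun ω => (X ω, Y ω, Z ω))
    ⟨fun t => ((t.1, t.2.1), t.2.2), fun _ => rfl⟩ ⟨fun t => (t.1.1, t.1.2, t.2), fun _ => rfl⟩]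
  ring

lemma Hc_pair_le (hp : IsPMF p) (X : Ω → α) (Y : Ω → β) (Z : Ω → γ) :
    Hc p (fun ω => (X ω, Y ω)) Z ≤ Hc p X Z + Hc p Y Z := by
  rw [Hc_chain hp X Y Z]
  have := Hc_cond_pair_le hp X Y Z
  linarith

lemma CMI_le_Hc (hp : IsPMF p) (X : Ω → α) (U : Ω → β) (Y : Ω → γ) :
    CMI p X U Y ≤ Hc p U Y := by
  rw [CMI_symm hp, CMI_eq]
  have := Hc_nonneg hp U (fun ω => (X ω, Y ω))
  linarith

lemma CMI_mono_left (hp : IsPMF p) {X : Ω → α} {X' : Ω → β} (Z : Ω → γ) (Y : Ω → δ)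
    (h : FnOf X X') : CMI p X Z Y ≤ CMI p X' Z Y := by
  rw [CMI_symm hp X Z Y, CMI_symm hp X' Z Y, CMI_eq, CMI_eq]
  have : Hc p Z (fun ω => (X' ω, Y ω)) ≤ Hc p Z (fun ω => (X ω, Y ω)) :=
    Hc_mono_cond hp Z (FnOf.pair_left (FnOf.comp h FnOf.fst) FnOf.snd)
  linarith

lemma CMI_congr_cond (hp : IsPMF p) (X : Ω → α) (Z : Ω → β) {Y : Ω → γ} {Y' : Ω → δ}
    (h1 : FnOf Y Y') (h2 : FnOf Y' Y) : CMI p X Z Y = CMI p X Z Y' := by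
  rw [CMI_eq, CMI_eq]
  rw [Hc_congr_cond hp X h1 h2,
    Hc_congr_cond hp X (Y := fun ω => (Z ω, Y ω)) (Y' := fun ω => (Z ω, Y' ω))
      (FnOf.pair_left FnOf.fst (FnOf.comp h1 FnOf.snd))
      (FnOf.pair_left FnOf.fst (FnOf.comp h2 FnOf.snd))]

/-- chain rule for CMI in the second slot:
`I(X ; (Y,U) | Z) = I(X ; U | Z) + I(X ; Y | (U,Z))`. -/
lemma CMI_chain (hp : IsPMF p) (X : Ω → α) (Y : Ω → β) (U : Ω → δ) (Z : Ω → γ) :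
    CMI p X (fun ω => (Y ω, U ω)) Z
      = CMI p X U Z + CMI p X Y (fun ω => (U ω, Z ω)) := by
  rw [CMI_eq, CMI_eq, CMI_eq]
  have e : Hc p X (fun ω => ((Y ω, U ω), Z ω)) = Hc p X (fun ω => (Y ω, U ω, Z ω)) :=
    Hc_congr_cond hp X
      ⟨fun t => ((t.1, t.2.1), t.2.2), fun _ => rfl⟩
      ⟨fun t => (t.1.1, (t.1.2, t.2)), fun _ => rfl⟩
  linarith [e]

/-- If `I(X;Y|Z) = 0` and `U` is a.s. determined by `(Y,Z)`, then `I(X;Y|(U,Z)) = 0`. -/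
lemma CMI_cond_extend (hp : IsPMF p) {X : Ω → α} {Y : Ω → β} {U : Ω → δ} {Z : Ω → γ}
    (h1 : CMI p X Y Z = 0) (h2 : Hc p U (fun ω => (Y ω, Z ω)) = 0) :
    CMI p X Y (fun ω => (U ω, Z ω)) = 0 := by
  have c1 : CMI p X (fun ω => (Y ω, U ω)) Z
      = CMI p X U Z + CMI p X Y (fun ω => (U ω, Z ω)) := CMI_chain hp X Y U Z
  have c2 : CMI p X (fun ω => (U ω, Y ω)) Z
      = CMI p X Y Z + CMI p X U (fun ω => (Y ω, Z ω)) := CMI_chain hp X U Y Z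
  have e : CMI p X (fun ω => (Y ω, U ω)) Z = CMI p X (fun ω => (U ω, Y ω)) Z := by
    rw [CMI_symm hp X _ Z, CMI_symm hp X (fun ω => (U ω, Y ω)) Z]
    exact le_antisymm (CMI_mono_left hp X Z (FnOf.pair_left FnOf.snd FnOf.fst))
      (CMI_mono_left hp X Z (FnOf.pair_left FnOf.snd FnOf.fst))
  have h3 : CMI p X U (fun ω => (Y ω, Z ω)) ≤ 0 := by
    have := CMI_le_Hc hp X U (fun ω => (Y ω, Z ω))
    rw [h2] at this; exact this
  have h3' : 0 ≤ CMI p X U (fun ω => (Y ω, Z ω)) := CMI_nonneg hp X U _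
  have h4 : 0 ≤ CMI p X U Z := CMI_nonneg hp X U Z
  have h5 : 0 ≤ CMI p X Y (fun ω => (U ω, Z ω)) := CMI_nonneg hp X Y _
  -- from c2 and h1: CMI p X (U,Y) Z = CMI X U (Y,Z) = 0
  -- then from e, c1: 0 = CMI X U Z + CMI X Y (U,Z)
  linarith

end Toolkit

section Tools2
variable {Ω : Type} [Fintype Ω] {p : Ω → ℝ}
variable {α β γ : Type*} [Fintype α] [Fintype β] [Fintype γ]

/-- Identically distributed tuples have equal entropies for any derived variable. -/
lemma H_congr_comp_dist {T1 T2 : Ω → α} {U V : Ω → β} (f : α → β)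
    (hdist : ∀ t, distOf p T1 t = distOf p T2 t)
    (hU : ∀ ω, U ω = f (T1 ω)) (hV : ∀ ω, V ω = f (T2 ω)) : H p U = H p V := by
  unfold H
  refine Finset.sum_congr rfl fun b _ => ?_
  rw [distOf_comp' T1 U f hU, distOf_comp' T2 V f hV]
  simp_rw [hdist]

/-- Conditional subadditivity of entropy for a finite family of random variables. -/
lemma Hc_pi_le {ι : Type} [DecidableEq ι] (hp : IsPMF p) (s : Finset ι)
    (τ : ι → Type) [∀ i, Fintype (τ i)] (V : ∀ i, Ω → τ i) (C : Ω → γ) :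
    Hc p (fun ω => (fun i : {x // x ∈ s} => V i.1 ω)) C ≤ ∑ i ∈ s, Hc p (V i) C := by
  classical
  induction s using Finset.cons_induction with
  | empty =>
    rw [Finset.sum_empty]
    have : Hc p (fun ω => (fun i : {x // x ∈ (∅ : Finset ι)} => V i.1 ω)) C = 0 :=
      Hc_self_zero hp ⟨fun _ => fun i => absurd i.2 (Finset.notMem_empty i.1),
        fun ω => funext fun i => absurd i.2 (Finset.notMem_empty i.1)⟩
    rw [this]
  | cons a t ha ih =>
    have key : Hc p (fun ω => (fun i : {x // x ∈ Finset.cons a t ha} => V i.1 ω)) C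
        = Hc p (fun ω => (V a ω, fun i : {x // x ∈ t} => V i.1 ω)) C := by
      refine Hc_congr_left hp C ?_ ?_
      · refine ⟨fun pr => fun i => if h : i.1 = a then cast (congrArg τ h.symm) pr.1
          else pr.2 ⟨i.1, (Finset.mem_cons.mp i.2).resolve_left h⟩, fun ω => ?_⟩
        funext i
        rcases i with ⟨i, hi⟩
        dsimp only
        split
        · rename_i h
          subst h
          simp
        · rfl
      · exact ⟨fun x => (x ⟨a, Finset.mem_cons_self a t⟩,
          fun i => x ⟨i.1, Finset.mem_cons_of_mem i.2⟩), fun ω => rfl⟩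
    rw [key, Finset.sum_cons]
    calc Hc p (fun ω => (V a ω, fun i : {x // x ∈ t} => V i.1 ω)) C
        ≤ Hc p (V a) C + Hc p (fun ω => (fun i : {x // x ∈ t} => V i.1 ω)) C :=
          Hc_pair_le hp _ _ C
      _ ≤ Hc p (V a) C + ∑ i ∈ t, Hc p (V i) C := by linarith [ih]

/-- Subadditivity of entropy for a finite family of random variables. -/
lemma H_pi_le {ι : Type} [DecidableEq ι] (hp : IsPMF p) (s : Finset ι)
    (τ : ι → Type) [∀ i, Fintype (τ i)] (V : ∀ i, Ω → τ i) :
    H p (fun ω => (fun i : {x // x ∈ s} => V i.1 ω)) ≤ ∑ i ∈ s, H p (V i) := by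
  have h := Hc_pi_le hp s τ V (fun _ => (() : Unit))
  rw [Hc_unit hp] at h
  calc H p (fun ω => (fun i : {x // x ∈ s} => V i.1 ω))
      ≤ ∑ i ∈ s, Hc p (V i) (fun _ => (() : Unit)) := h
    _ = ∑ i ∈ s, H p (V i) := Finset.sum_congr rfl fun i _ => Hc_unit hp (V i)

end Tools2

end SDMM

open Finset in
theorem count_aux (N m : ℕ) (hm : 1 ≤ m) (hmN : m ≤ N) (n : Fin N) :
    ((Finset.powersetCard m (Finset.univ : Finset (Fin N))).filter (fun B => n ∈ B)).card
      = (N-1).choose (m-1) := by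
  classical
  have key : ((powersetCard m (univ : Finset (Fin N))).filter (fun B => n ∈ B)).card
      = (powersetCard (m-1) (univ.erase n)).card := by
    refine Finset.card_bij' (fun B _ => B.erase n) (fun C _ => insert n C) ?_ ?_ ?_ ?_
    · intro B hB
      simp only [Finset.mem_filter, Finset.mem_powersetCard] at hB ⊢
      obtain ⟨⟨hsub, hcard⟩, hn⟩ := hB
      exact ⟨Finset.erase_subset_erase n hsub, by rw [Finset.card_erase_of_mem hn, hcard]⟩
    · intro C hC
      simp only [Finset.mem_filter, Finset.mem_powersetCard] at hC ⊢
      obtain ⟨hsub, hcard⟩ := hC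
      have hnC : n ∉ C := fun h => (Finset.mem_erase.mp (hsub h)).1 rfl
      refine ⟨⟨Finset.subset_univ _, ?_⟩, Finset.mem_insert_self n C⟩
      rw [Finset.card_insert_of_notMem hnC, hcard]
      omega
    · intro B hB
      simp only [Finset.mem_filter] at hB
      exact Finset.insert_erase hB.2
    · intro C hC
      simp only [Finset.mem_powersetCard] at hC
      have hnC : n ∉ C := fun h => (Finset.mem_erase.mp (hC.1 h)).1 rfl
      exact Finset.erase_insert hnC
  rw [key, Finset.card_powersetCard, Finset.card_erase_of_mem (Finset.mem_univ n),
    Finset.card_univ, Fintype.card_fin]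


set_option maxHeartbeats 1000000 in
/-- **Theorem 1 of MM-XSTPIR, regime `X < N ≤ X + T`.**
For any MM-XSTPIR scheme with `N` servers, `K` mutually independent messages of
entropy `ℓ` each, `X`-secure storage, `T`-private queries, and retrieval sets of
size `M`, the total download satisfies `Σₙ Dₙ ≥ (N/(N-X))·K·ℓ`; hence the rate
`Mℓ / Σₙ Dₙ` is at most `M(N-X)/(KN)`. -/
theorem mm_xstpir_converse_small_N
    (N K X T M : ℕ) (ℓ : ℝ) (hℓ : 0 < ℓ)
    (hXN : X < N) (hNXT : N ≤ X + T) (hM : 0 < M) (hMK : M ≤ K)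
    (Ω : Type) [Fintype Ω] (p : Ω → ℝ) (hp : SDMM.IsPMF p)
    (𝒲 : Fin K → Type) [∀ k, Fintype (𝒲 k)]
    (𝒮 : Fin N → Type) [∀ n, Fintype (𝒮 n)]
    (𝒬 : Fin N → Type) [∀ n, Fintype (𝒬 n)]
    (𝒜 : Fin N → Type) [∀ n, Fintype (𝒜 n)]
    (W : ∀ k, Ω → 𝒲 k) (S : ∀ n, Ω → 𝒮 n)
    (Q : Finset (Fin K) → ∀ n, Ω → 𝒬 n)
    (A : Finset (Fin K) → ∀ n, Ω → 𝒜 n)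
    -- each message has entropy ℓ, and the messages are mutually independent
    (hWent : ∀ k, SDMM.H p (W k) = ℓ)
    (hWindep : SDMM.H p (fun ω => (fun k => W k ω)) = ∑ k, SDMM.H p (W k))
    -- the messages are a function of the total storage
    (hWS : SDMM.Hc p (fun ω => (fun k => W k ω)) (fun ω => (fun n => S n ω)) = 0)
    -- X-security of the storage
    (hsec : ∀ 𝒳 : Finset (Fin N), 𝒳.card = X →
      SDMM.MI p (fun ω => (fun n : 𝒳 => S n.1 ω)) (fun ω => (fun k => W k ω)) = 0)
    -- queries are independent of the storage
    (hSQ : ∀ 𝒦 : Finset (Fin K), 𝒦.card = M →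
      SDMM.MI p (fun ω => (fun n => S n ω)) (fun ω => (fun n => Q 𝒦 n ω)) = 0)
    -- each answer is a function of the corresponding query and storage
    (hans : ∀ (𝒦 : Finset (Fin K)), 𝒦.card = M → ∀ n,
      SDMM.Hc p (A 𝒦 n) (fun ω => (Q 𝒦 n ω, S n ω)) = 0)
    -- correctness: desired messages decodable from all answers and queries
    (hcorrect : ∀ 𝒦 : Finset (Fin K), 𝒦.card = M →
      SDMM.Hc p (fun ω => (fun k : 𝒦 => W k.1 ω))
        (fun ω => ((fun n => A 𝒦 n ω), (fun n => Q 𝒦 n ω))) = 0)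
    -- T-privacy: transcripts at any ≤ T servers are identically distributed
    (hpriv : ∀ 𝒯 : Finset (Fin N), 𝒯.card ≤ T →
      ∀ 𝒦 𝒦' : Finset (Fin K), 𝒦.card = M → 𝒦'.card = M →
      ∀ t, SDMM.distOf p (fun ω => ((fun n : 𝒯 => Q 𝒦 n.1 ω),
              (fun n : 𝒯 => A 𝒦 n.1 ω), (fun n => S n ω), (fun k => W k ω))) t =
           SDMM.distOf p (fun ω => ((fun n : 𝒯 => Q 𝒦' n.1 ω),
              (fun n : 𝒯 => A 𝒦' n.1 ω), (fun n => S n ω), (fun k => W k ω))) t)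
    -- per-server download costs
    (Dl : Fin N → ℝ)
    (hD : ∀ 𝒦 : Finset (Fin K), 𝒦.card = M → ∀ n, SDMM.H p (A 𝒦 n) ≤ Dl n) :
    (N : ℝ) / ((N : ℝ) - (X : ℝ)) * ((K : ℝ) * ℓ) ≤ ∑ n, Dl n ∧
      (M : ℝ) * ℓ / ∑ n, Dl n ≤ (M : ℝ) * ((N : ℝ) - (X : ℝ)) / ((K : ℝ) * (N : ℝ)) := by
  classical
  have hXN' : X ≤ N := le_of_lt hXN
  set m : ℕ := N - X with hmdef
  have hm1 : 1 ≤ m := by omega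
  have hmN : m ≤ N := by omega
  have hHW : SDMM.H p (fun ω => (fun k => W k ω)) = (K : ℝ) * ℓ := by
    rw [hWindep]
    simp only [hWent, Finset.sum_const, Finset.card_univ, Fintype.card_fin, nsmul_eq_mul]
  have keyB : ∀ B : Finset (Fin N), B.card = m → (K : ℝ) * ℓ ≤ ∑ n ∈ B, Dl n := by
    intro B hBcard
    have hBT : B.card ≤ T := by rw [hBcard]; omega
    have hXccard : (Bᶜ).card = X := by
      rw [Finset.card_compl, Fintype.card_fin, hBcard]; omega
    obtain ⟨𝒦₀, -, h𝒦₀⟩ := Finset.exists_subset_card_eq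
      (show M ≤ (Finset.univ : Finset (Fin K)).card by
        rw [Finset.card_univ, Fintype.card_fin]; exact hMK)
    -- H(W,S) = H(S)
    have hWS' : SDMM.H p (fun ω => ((fun k => W k ω), (fun n => S n ω)))
        = SDMM.H p (fun ω => (fun n => S n ω)) := by
      have h0 := hWS; unfold SDMM.Hc at h0; linarith
    -- (W,S) is independent of the queries
    have P1 : ∀ 𝒦 : Finset (Fin K), 𝒦.card = M →
        SDMM.Hc p (fun ω => ((fun k => W k ω), (fun n => S n ω))) (fun ω => (fun n => Q 𝒦 n ω))
          = SDMM.H p (fun ω => ((fun k => W k ω), (fun n => S n ω))) := by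
      intro 𝒦 h𝒦
      have hchain := SDMM.Hc_chain hp (fun ω => (fun k => W k ω)) (fun ω => (fun n => S n ω))
        (fun ω => (fun n => Q 𝒦 n ω))
      have hSQ' : SDMM.Hc p (fun ω => (fun n => S n ω)) (fun ω => (fun n => Q 𝒦 n ω))
          = SDMM.H p (fun ω => (fun n => S n ω)) := by
        have h0 := hSQ 𝒦 h𝒦; rw [SDMM.MI_eq] at h0; linarith
      have hWSQ : SDMM.Hc p (fun ω => (fun k => W k ω))
          (fun ω => ((fun n => S n ω), (fun n => Q 𝒦 n ω))) = 0 := by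
        have hle := SDMM.Hc_mono_cond hp (Y := fun ω => ((fun n => S n ω), (fun n => Q 𝒦 n ω)))
          (Y' := fun ω => (fun n => S n ω)) (fun ω => (fun k => W k ω)) SDMM.FnOf.fst
        have hge := SDMM.Hc_nonneg hp (fun ω => (fun k => W k ω))
          (fun ω => ((fun n => S n ω), (fun n => Q 𝒦 n ω)))
        rw [hWS] at hle
        linarith
      rw [hchain, hWSQ, hSQ', hWS']
      ring
    have HcQWS : ∀ 𝒦 : Finset (Fin K), 𝒦.card = M →
        SDMM.Hc p (fun ω => (fun n => Q 𝒦 n ω))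
          (fun ω => ((fun k => W k ω), (fun n => S n ω)))
          = SDMM.H p (fun ω => (fun n => Q 𝒦 n ω)) := by
      intro 𝒦 h𝒦
      have h0 := P1 𝒦 h𝒦
      have h1 : SDMM.MI p (fun ω => ((fun k => W k ω), (fun n => S n ω)))
          (fun ω => (fun n => Q 𝒦 n ω)) = 0 := by
        rw [SDMM.MI_eq, h0]; ring
      rw [SDMM.MI_symm hp, SDMM.MI_eq] at h1
      linarith
    -- I(W ; Q | S_Xc) = 0
    have CMI0 : ∀ 𝒦 : Finset (Fin K), 𝒦.card = M →
        SDMM.CMI p (fun ω => (fun k => W k ω)) (fun ω => (fun n => Q 𝒦 n ω))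
          (fun ω => (fun n : {x // x ∈ Bᶜ} => S n.1 ω)) = 0 := by
      intro 𝒦 h𝒦
      refine le_antisymm ?_ (SDMM.CMI_nonneg hp _ _ _)
      rw [SDMM.CMI_symm hp, SDMM.CMI_eq]
      have h1 := SDMM.Hc_le_H hp (fun ω => (fun n => Q 𝒦 n ω))
        (fun ω => (fun n : {x // x ∈ Bᶜ} => S n.1 ω))
      have h2 := SDMM.Hc_mono_cond hp
        (Y := fun ω => ((fun k => W k ω), (fun n => S n ω)))
        (Y' := fun ω => ((fun k => W k ω), (fun n : {x // x ∈ Bᶜ} => S n.1 ω)))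
        (fun ω => (fun n => Q 𝒦 n ω))
        ⟨fun t => (t.1, fun n : {x // x ∈ Bᶜ} => t.2 n.1), fun ω => rfl⟩
      rw [HcQWS 𝒦 h𝒦] at h2
      linarith
    have HcWSX : SDMM.Hc p (fun ω => (fun k => W k ω))
        (fun ω => (fun n : {x // x ∈ Bᶜ} => S n.1 ω))
          = SDMM.H p (fun ω => (fun k => W k ω)) := by
      have h0 := hsec Bᶜ hXccard
      rw [SDMM.MI_symm hp, SDMM.MI_eq] at h0
      linarith
    have step1' : SDMM.Hc p (fun ω => (fun k => W k ω))
        (fun ω => ((fun n => Q 𝒦₀ n ω), (fun n : {x // x ∈ Bᶜ} => S n.1 ω)))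
          = SDMM.H p (fun ω => (fun k => W k ω)) := by
      have e := SDMM.CMI_eq (p := p) (X := fun ω => (fun k => W k ω))
        (Z := fun ω => (fun n => Q 𝒦₀ n ω)) (Y := fun ω => (fun n : {x // x ∈ Bᶜ} => S n.1 ω))
      rw [CMI0 𝒦₀ h𝒦₀, HcWSX] at e
      have hle := SDMM.Hc_le_H hp (fun ω => (fun k => W k ω))
        (fun ω => ((fun n => Q 𝒦₀ n ω), (fun n : {x // x ∈ Bᶜ} => S n.1 ω)))
      linarith
    have step1 : SDMM.Hc p (fun ω => (fun k => W k ω))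
        (fun ω => ((fun n : {x // x ∈ B} => Q 𝒦₀ n.1 ω), (fun n : {x // x ∈ Bᶜ} => S n.1 ω)))
          = (K : ℝ) * ℓ := by
      have hle := SDMM.Hc_le_H hp (fun ω => (fun k => W k ω))
        (fun ω => ((fun n : {x // x ∈ B} => Q 𝒦₀ n.1 ω), (fun n : {x // x ∈ Bᶜ} => S n.1 ω)))
      have hge := SDMM.Hc_mono_cond hp
        (Y := fun ω => ((fun n => Q 𝒦₀ n ω), (fun n : {x // x ∈ Bᶜ} => S n.1 ω)))
        (Y' := fun ω => ((fun n : {x // x ∈ B} => Q 𝒦₀ n.1 ω), (fun n : {x // x ∈ Bᶜ} => S n.1 ω)))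
        (fun ω => (fun k => W k ω))
        ⟨fun t => ((fun n : {x // x ∈ B} => t.1 n.1), t.2), fun ω => rfl⟩
      rw [step1'] at hge
      rw [hHW] at hle hge
      linarith
    -- decodability: W_𝒦 is determined by (A_B, Q_B, S_{Bᶜ}) under scheme 𝒦
    have dec : ∀ 𝒦 : Finset (Fin K), 𝒦.card = M →
        SDMM.Hc p (fun ω => (fun k : {x // x ∈ 𝒦} => W k.1 ω))
          (fun ω => ((fun n : {x // x ∈ B} => A 𝒦 n.1 ω),
            ((fun n : {x // x ∈ B} => Q 𝒦 n.1 ω), (fun n : {x // x ∈ Bᶜ} => S n.1 ω)))) = 0 := by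
      intro 𝒦 h𝒦
      -- (i) the answers of the Bᶜ-servers are determined by full queries + S_{Bᶜ}
      have hAXc : SDMM.Hc p (fun ω => (fun n : {x // x ∈ Bᶜ} => A 𝒦 n.1 ω))
          (fun ω => ((fun n => Q 𝒦 n ω), ((fun n : {x // x ∈ B} => A 𝒦 n.1 ω),
            ((fun n : {x // x ∈ B} => Q 𝒦 n.1 ω), (fun n : {x // x ∈ Bᶜ} => S n.1 ω))))) = 0 := by
        refine le_antisymm ?_ (SDMM.Hc_nonneg hp _ _)
        have hsub := SDMM.Hc_pi_le hp Bᶜ 𝒜 (fun n => A 𝒦 n)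
          (fun ω => ((fun n => Q 𝒦 n ω), ((fun n : {x // x ∈ B} => A 𝒦 n.1 ω),
            ((fun n : {x // x ∈ B} => Q 𝒦 n.1 ω), (fun n : {x // x ∈ Bᶜ} => S n.1 ω)))))
        have hterm : ∀ n ∈ Bᶜ, SDMM.Hc p (A 𝒦 n)
            (fun ω => ((fun n => Q 𝒦 n ω), ((fun n : {x // x ∈ B} => A 𝒦 n.1 ω),
              ((fun n : {x // x ∈ B} => Q 𝒦 n.1 ω), (fun n : {x // x ∈ Bᶜ} => S n.1 ω))))) ≤ 0 := by
          intro n hn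
          have hmono := SDMM.Hc_mono_cond hp
            (Y := fun ω => ((fun n => Q 𝒦 n ω), ((fun n : {x // x ∈ B} => A 𝒦 n.1 ω),
              ((fun n : {x // x ∈ B} => Q 𝒦 n.1 ω), (fun n : {x // x ∈ Bᶜ} => S n.1 ω)))))
            (Y' := fun ω => (Q 𝒦 n ω, S n ω)) (A 𝒦 n)
            ⟨fun t => (t.1 n, t.2.2.2 ⟨n, hn⟩), fun ω => rfl⟩
          rw [hans 𝒦 h𝒦 n] at hmono
          exact hmono
        exact le_trans hsub (le_trans (Finset.sum_le_sum hterm) (by simp))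
      -- (ii) correctness: W_𝒦 determined by (A_{Bᶜ}, full Q, A_B, Q_B, S_{Bᶜ})
      have hWcor : SDMM.Hc p (fun ω => (fun k : {x // x ∈ 𝒦} => W k.1 ω))
          (fun ω => ((fun n : {x // x ∈ Bᶜ} => A 𝒦 n.1 ω),
            ((fun n => Q 𝒦 n ω), ((fun n : {x // x ∈ B} => A 𝒦 n.1 ω),
              ((fun n : {x // x ∈ B} => Q 𝒦 n.1 ω), (fun n : {x // x ∈ Bᶜ} => S n.1 ω)))))) ≤ 0 := by
        have hfn : SDMM.FnOf (fun ω => ((fun n => A 𝒦 n ω), (fun n => Q 𝒦 n ω)))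
            (fun ω => ((fun n : {x // x ∈ Bᶜ} => A 𝒦 n.1 ω),
              ((fun n => Q 𝒦 n ω), ((fun n : {x // x ∈ B} => A 𝒦 n.1 ω),
                ((fun n : {x // x ∈ B} => Q 𝒦 n.1 ω), (fun n : {x // x ∈ Bᶜ} => S n.1 ω)))))) := by
          refine ⟨fun t => ((fun n => if h : n ∈ Bᶜ then t.1 ⟨n, h⟩
            else t.2.2.1 ⟨n, by simpa using h⟩), t.2.1), fun ω => ?_⟩
          dsimp only
          refine Prod.ext ?_ rfl
          funext n
          dsimp only
          split <;> rfl
        have hmono := SDMM.Hc_mono_cond hp (fun ω => (fun k : {x // x ∈ 𝒦} => W k.1 ω)) hfn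
        rw [hcorrect 𝒦 h𝒦] at hmono
        exact hmono
      -- (iii) W_𝒦 determined by full queries + (A_B, Q_B, S_{Bᶜ})
      have hWD : SDMM.Hc p (fun ω => (fun k : {x // x ∈ 𝒦} => W k.1 ω))
          (fun ω => ((fun n => Q 𝒦 n ω), ((fun n : {x // x ∈ B} => A 𝒦 n.1 ω),
            ((fun n : {x // x ∈ B} => Q 𝒦 n.1 ω), (fun n : {x // x ∈ Bᶜ} => S n.1 ω))))) = 0 := by
        refine le_antisymm ?_ (SDMM.Hc_nonneg hp _ _)
        have h1 := SDMM.Hc_mono_left hp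
          (fun ω => ((fun n => Q 𝒦 n ω), ((fun n : {x // x ∈ B} => A 𝒦 n.1 ω),
            ((fun n : {x // x ∈ B} => Q 𝒦 n.1 ω), (fun n : {x // x ∈ Bᶜ} => S n.1 ω)))))
          (X := fun ω => (fun k : {x // x ∈ 𝒦} => W k.1 ω))
          (X' := fun ω => ((fun k : {x // x ∈ 𝒦} => W k.1 ω),
            (fun n : {x // x ∈ Bᶜ} => A 𝒦 n.1 ω)))
          SDMM.FnOf.fst
        have h2 := SDMM.Hc_chain hp (fun ω => (fun k : {x // x ∈ 𝒦} => W k.1 ω))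
          (fun ω => (fun n : {x // x ∈ Bᶜ} => A 𝒦 n.1 ω))
          (fun ω => ((fun n => Q 𝒦 n ω), ((fun n : {x // x ∈ B} => A 𝒦 n.1 ω),
            ((fun n : {x // x ∈ B} => Q 𝒦 n.1 ω), (fun n : {x // x ∈ Bᶜ} => S n.1 ω)))))
        rw [hAXc] at h2
        linarith [hWcor]
      -- (iv) Markov argument: I(W_𝒦 ; Q | A_B, Q_B, S_{Bᶜ}) = 0
      have c1 : SDMM.CMI p (fun ω => ((fun k => W k ω), (fun n => S n ω)))
          (fun ω => (fun n => Q 𝒦 n ω)) (fun ω => (fun n : {x // x ∈ B} => Q 𝒦 n.1 ω)) = 0 := by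
        refine le_antisymm ?_ (SDMM.CMI_nonneg hp _ _ _)
        rw [SDMM.CMI_eq]
        have e1 : SDMM.Hc p (fun ω => ((fun k => W k ω), (fun n => S n ω)))
            (fun ω => ((fun n => Q 𝒦 n ω), (fun n : {x // x ∈ B} => Q 𝒦 n.1 ω)))
              = SDMM.Hc p (fun ω => ((fun k => W k ω), (fun n => S n ω)))
                (fun ω => (fun n => Q 𝒦 n ω)) :=
          SDMM.Hc_congr_cond hp _
            ⟨fun q => (q, fun n : {x // x ∈ B} => q n.1), fun ω => rfl⟩
            ⟨Prod.fst, fun ω => rfl⟩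
        rw [e1, P1 𝒦 h𝒦]
        have h1 := SDMM.Hc_le_H hp (fun ω => ((fun k => W k ω), (fun n => S n ω)))
          (fun ω => (fun n : {x // x ∈ B} => Q 𝒦 n.1 ω))
        linarith
      have c2 : SDMM.Hc p (fun ω => ((fun n : {x // x ∈ B} => A 𝒦 n.1 ω),
          (fun n : {x // x ∈ Bᶜ} => S n.1 ω)))
          (fun ω => (((fun k => W k ω), (fun n => S n ω)),
            (fun n : {x // x ∈ B} => Q 𝒦 n.1 ω))) = 0 := by
        refine le_antisymm ?_ (SDMM.Hc_nonneg hp _ _)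
        have h1 := SDMM.Hc_pair_le hp (fun ω => (fun n : {x // x ∈ B} => A 𝒦 n.1 ω))
          (fun ω => (fun n : {x // x ∈ Bᶜ} => S n.1 ω))
          (fun ω => (((fun k => W k ω), (fun n => S n ω)), (fun n : {x // x ∈ B} => Q 𝒦 n.1 ω)))
        have h2 : SDMM.Hc p (fun ω => (fun n : {x // x ∈ Bᶜ} => S n.1 ω))
            (fun ω => (((fun k => W k ω), (fun n => S n ω)),
              (fun n : {x // x ∈ B} => Q 𝒦 n.1 ω))) = 0 :=
          SDMM.Hc_self_zero hp ⟨fun t => (fun n : {x // x ∈ Bᶜ} => t.1.2 n.1), fun ω => rfl⟩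
        have h3 : SDMM.Hc p (fun ω => (fun n : {x // x ∈ B} => A 𝒦 n.1 ω))
            (fun ω => (((fun k => W k ω), (fun n => S n ω)),
              (fun n : {x // x ∈ B} => Q 𝒦 n.1 ω))) ≤ 0 := by
          have hsub := SDMM.Hc_pi_le hp B 𝒜 (fun n => A 𝒦 n)
            (fun ω => (((fun k => W k ω), (fun n => S n ω)),
              (fun n : {x // x ∈ B} => Q 𝒦 n.1 ω)))
          have hterm : ∀ n ∈ B, SDMM.Hc p (A 𝒦 n)
              (fun ω => (((fun k => W k ω), (fun n => S n ω)),
                (fun n : {x // x ∈ B} => Q 𝒦 n.1 ω))) ≤ 0 := by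
            intro n hn
            have hmono := SDMM.Hc_mono_cond hp
              (Y := fun ω => (((fun k => W k ω), (fun n => S n ω)),
                (fun n : {x // x ∈ B} => Q 𝒦 n.1 ω)))
              (Y' := fun ω => (Q 𝒦 n ω, S n ω)) (A 𝒦 n)
              ⟨fun t => (t.2 ⟨n, hn⟩, t.1.2 n), fun ω => rfl⟩
            rw [hans 𝒦 h𝒦 n] at hmono
            exact hmono
          exact le_trans hsub (le_trans (Finset.sum_le_sum hterm) (by simp))
        linarith
      have c3 : SDMM.CMI p (fun ω => (fun n => Q 𝒦 n ω))
          (fun ω => ((fun k => W k ω), (fun n => S n ω)))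
          (fun ω => (((fun n : {x // x ∈ B} => A 𝒦 n.1 ω),
            (fun n : {x // x ∈ Bᶜ} => S n.1 ω)), (fun n : {x // x ∈ B} => Q 𝒦 n.1 ω))) = 0 := by
        refine SDMM.CMI_cond_extend hp ?_ c2
        rw [SDMM.CMI_symm hp]
        exact c1
      have c4 : SDMM.CMI p (fun ω => (fun k : {x // x ∈ 𝒦} => W k.1 ω))
          (fun ω => (fun n => Q 𝒦 n ω))
          (fun ω => ((fun n : {x // x ∈ B} => A 𝒦 n.1 ω),
            ((fun n : {x // x ∈ B} => Q 𝒦 n.1 ω), (fun n : {x // x ∈ Bᶜ} => S n.1 ω)))) = 0 := by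
        refine le_antisymm ?_ (SDMM.CMI_nonneg hp _ _ _)
        have h2 := SDMM.CMI_mono_left hp (fun ω => (fun n => Q 𝒦 n ω))
          (fun ω => ((fun n : {x // x ∈ B} => A 𝒦 n.1 ω),
            ((fun n : {x // x ∈ B} => Q 𝒦 n.1 ω), (fun n : {x // x ∈ Bᶜ} => S n.1 ω))))
          (X := fun ω => (fun k : {x // x ∈ 𝒦} => W k.1 ω))
          (X' := fun ω => ((fun k => W k ω), (fun n => S n ω)))
          ⟨fun t => (fun k : {x // x ∈ 𝒦} => t.1 k.1), fun ω => rfl⟩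
        have h4 : SDMM.CMI p (fun ω => ((fun k => W k ω), (fun n => S n ω)))
            (fun ω => (fun n => Q 𝒦 n ω))
            (fun ω => ((fun n : {x // x ∈ B} => A 𝒦 n.1 ω),
              ((fun n : {x // x ∈ B} => Q 𝒦 n.1 ω), (fun n : {x // x ∈ Bᶜ} => S n.1 ω))))
              = SDMM.CMI p (fun ω => (fun n => Q 𝒦 n ω))
            (fun ω => ((fun k => W k ω), (fun n => S n ω)))
            (fun ω => ((fun n : {x // x ∈ B} => A 𝒦 n.1 ω),
              ((fun n : {x // x ∈ B} => Q 𝒦 n.1 ω), (fun n : {x // x ∈ Bᶜ} => S n.1 ω)))) :=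
          SDMM.CMI_symm hp _ _ _
        have h5 : SDMM.CMI p (fun ω => (fun n => Q 𝒦 n ω))
            (fun ω => ((fun k => W k ω), (fun n => S n ω)))
            (fun ω => ((fun n : {x // x ∈ B} => A 𝒦 n.1 ω),
              ((fun n : {x // x ∈ B} => Q 𝒦 n.1 ω), (fun n : {x // x ∈ Bᶜ} => S n.1 ω))))
              = SDMM.CMI p (fun ω => (fun n => Q 𝒦 n ω))
            (fun ω => ((fun k => W k ω), (fun n => S n ω)))
            (fun ω => (((fun n : {x // x ∈ B} => A 𝒦 n.1 ω),
              (fun n : {x // x ∈ Bᶜ} => S n.1 ω)), (fun n : {x // x ∈ B} => Q 𝒦 n.1 ω))) :=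
          SDMM.CMI_congr_cond hp _ _
            ⟨fun t => (t.1.1, (t.2, t.1.2)), fun ω => rfl⟩
            ⟨fun t => ((t.1, t.2.2), t.2.1), fun ω => rfl⟩
        linarith [h2, h4, h5, c3]
      -- (v) conclude
      have final : SDMM.CMI p (fun ω => (fun k : {x // x ∈ 𝒦} => W k.1 ω))
          (fun ω => (fun n => Q 𝒦 n ω))
          (fun ω => ((fun n : {x // x ∈ B} => A 𝒦 n.1 ω),
            ((fun n : {x // x ∈ B} => Q 𝒦 n.1 ω), (fun n : {x // x ∈ Bᶜ} => S n.1 ω))))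
          = SDMM.Hc p (fun ω => (fun k : {x // x ∈ 𝒦} => W k.1 ω))
            (fun ω => ((fun n : {x // x ∈ B} => A 𝒦 n.1 ω),
              ((fun n : {x // x ∈ B} => Q 𝒦 n.1 ω), (fun n : {x // x ∈ Bᶜ} => S n.1 ω))))
          - SDMM.Hc p (fun ω => (fun k : {x // x ∈ 𝒦} => W k.1 ω))
            (fun ω => ((fun n => Q 𝒦 n ω), ((fun n : {x // x ∈ B} => A 𝒦 n.1 ω),
              ((fun n : {x // x ∈ B} => Q 𝒦 n.1 ω), (fun n : {x // x ∈ Bᶜ} => S n.1 ω))))) :=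
        SDMM.CMI_eq _ _ _
      rw [c4, hWD] at final
      linarith
    -- privacy: the conditional entropy is the same under any retrieval set
    have priv : ∀ 𝒦 : Finset (Fin K), 𝒦.card = M → ∀ 𝒦' : Finset (Fin K), 𝒦'.card = M →
        SDMM.Hc p (fun ω => (fun k : {x // x ∈ 𝒦'} => W k.1 ω))
          (fun ω => ((fun n : {x // x ∈ B} => A 𝒦 n.1 ω),
            ((fun n : {x // x ∈ B} => Q 𝒦 n.1 ω), (fun n : {x // x ∈ Bᶜ} => S n.1 ω))))
        = SDMM.Hc p (fun ω => (fun k : {x // x ∈ 𝒦'} => W k.1 ω))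
          (fun ω => ((fun n : {x // x ∈ B} => A 𝒦' n.1 ω),
            ((fun n : {x // x ∈ B} => Q 𝒦' n.1 ω), (fun n : {x // x ∈ Bᶜ} => S n.1 ω)))) := by
      intro 𝒦 h𝒦 𝒦' h𝒦'
      have hd := hpriv B hBT 𝒦 𝒦' h𝒦 h𝒦'
      have e1 : SDMM.H p (fun ω => ((fun k : {x // x ∈ 𝒦'} => W k.1 ω),
          ((fun n : {x // x ∈ B} => A 𝒦 n.1 ω), ((fun n : {x // x ∈ B} => Q 𝒦 n.1 ω),
            (fun n : {x // x ∈ Bᶜ} => S n.1 ω)))))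
          = SDMM.H p (fun ω => ((fun k : {x // x ∈ 𝒦'} => W k.1 ω),
          ((fun n : {x // x ∈ B} => A 𝒦' n.1 ω), ((fun n : {x // x ∈ B} => Q 𝒦' n.1 ω),
            (fun n : {x // x ∈ Bᶜ} => S n.1 ω))))) :=
        SDMM.H_congr_comp_dist
          (f := fun t => ((fun k : {x // x ∈ 𝒦'} => t.2.2.2 k.1),
            (t.2.1, (t.1, (fun n : {x // x ∈ Bᶜ} => t.2.2.1 n.1)))))
          hd (fun ω => rfl) (fun ω => rfl)
      have e2 : SDMM.H p (fun ω => ((fun n : {x // x ∈ B} => A 𝒦 n.1 ω),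
          ((fun n : {x // x ∈ B} => Q 𝒦 n.1 ω), (fun n : {x // x ∈ Bᶜ} => S n.1 ω))))
          = SDMM.H p (fun ω => ((fun n : {x // x ∈ B} => A 𝒦' n.1 ω),
          ((fun n : {x // x ∈ B} => Q 𝒦' n.1 ω), (fun n : {x // x ∈ Bᶜ} => S n.1 ω)))) :=
        SDMM.H_congr_comp_dist
          (f := fun t => (t.2.1, (t.1, (fun n : {x // x ∈ Bᶜ} => t.2.2.1 n.1))))
          hd (fun ω => rfl) (fun ω => rfl)
      unfold SDMM.Hc
      rw [e1, e2]
    -- covering all K messages with M-subsets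
    have cover : SDMM.Hc p (fun ω => (fun k => W k ω))
        (fun ω => ((fun n : {x // x ∈ B} => A 𝒦₀ n.1 ω),
          ((fun n : {x // x ∈ B} => Q 𝒦₀ n.1 ω), (fun n : {x // x ∈ Bᶜ} => S n.1 ω)))) = 0 := by
      refine le_antisymm ?_ (SDMM.Hc_nonneg hp _ _)
      have e0 : SDMM.Hc p (fun ω => (fun k => W k ω))
          (fun ω => ((fun n : {x // x ∈ B} => A 𝒦₀ n.1 ω),
            ((fun n : {x // x ∈ B} => Q 𝒦₀ n.1 ω), (fun n : {x // x ∈ Bᶜ} => S n.1 ω))))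
          = SDMM.Hc p (fun ω => (fun k : {x // x ∈ (Finset.univ : Finset (Fin K))} => W k.1 ω))
          (fun ω => ((fun n : {x // x ∈ B} => A 𝒦₀ n.1 ω),
            ((fun n : {x // x ∈ B} => Q 𝒦₀ n.1 ω), (fun n : {x // x ∈ Bᶜ} => S n.1 ω)))) :=
        SDMM.Hc_congr_left hp _
          ⟨fun t => (fun k => t ⟨k, Finset.mem_univ k⟩), fun ω => rfl⟩
          ⟨fun t => (fun k : {x // x ∈ (Finset.univ : Finset (Fin K))} => t k.1), fun ω => rfl⟩
      rw [e0]
      have hsub := SDMM.Hc_pi_le hp (Finset.univ : Finset (Fin K)) 𝒲 W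
        (fun ω => ((fun n : {x // x ∈ B} => A 𝒦₀ n.1 ω),
          ((fun n : {x // x ∈ B} => Q 𝒦₀ n.1 ω), (fun n : {x // x ∈ Bᶜ} => S n.1 ω))))
      have hterm : ∀ k ∈ (Finset.univ : Finset (Fin K)), SDMM.Hc p (W k)
          (fun ω => ((fun n : {x // x ∈ B} => A 𝒦₀ n.1 ω),
            ((fun n : {x // x ∈ B} => Q 𝒦₀ n.1 ω), (fun n : {x // x ∈ Bᶜ} => S n.1 ω)))) ≤ 0 := by
        intro k _
        obtain ⟨𝒦k, hksub, h𝒦k⟩ := Finset.exists_superset_card_eq (s := {k}) (n := M)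
          (by simp; omega) (by simpa using hMK)
        have hk : k ∈ 𝒦k := hksub (Finset.mem_singleton_self k)
        have h1 := SDMM.Hc_mono_left hp
          (fun ω => ((fun n : {x // x ∈ B} => A 𝒦₀ n.1 ω),
            ((fun n : {x // x ∈ B} => Q 𝒦₀ n.1 ω), (fun n : {x // x ∈ Bᶜ} => S n.1 ω))))
          (X := W k) (X' := fun ω => (fun k : {x // x ∈ 𝒦k} => W k.1 ω))
          ⟨fun t => t ⟨k, hk⟩, fun ω => rfl⟩
        rw [priv 𝒦₀ h𝒦₀ 𝒦k h𝒦k, dec 𝒦k h𝒦k] at h1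
        exact h1
      refine le_trans hsub ?_
      exact le_trans (Finset.sum_le_sum hterm) (by simp)
    -- the download chain for this B
    have chain1 : SDMM.CMI p (fun ω => (fun k => W k ω))
        (fun ω => (fun n : {x // x ∈ B} => A 𝒦₀ n.1 ω))
        (fun ω => ((fun n : {x // x ∈ B} => Q 𝒦₀ n.1 ω), (fun n : {x // x ∈ Bᶜ} => S n.1 ω)))
        = SDMM.Hc p (fun ω => (fun k => W k ω))
          (fun ω => ((fun n : {x // x ∈ B} => Q 𝒦₀ n.1 ω), (fun n : {x // x ∈ Bᶜ} => S n.1 ω)))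
        - SDMM.Hc p (fun ω => (fun k => W k ω))
          (fun ω => ((fun n : {x // x ∈ B} => A 𝒦₀ n.1 ω),
            ((fun n : {x // x ∈ B} => Q 𝒦₀ n.1 ω), (fun n : {x // x ∈ Bᶜ} => S n.1 ω)))) :=
      SDMM.CMI_eq _ _ _
    rw [step1, cover] at chain1
    have chain2 : SDMM.CMI p (fun ω => (fun k => W k ω))
        (fun ω => (fun n : {x // x ∈ B} => A 𝒦₀ n.1 ω))
        (fun ω => ((fun n : {x // x ∈ B} => Q 𝒦₀ n.1 ω), (fun n : {x // x ∈ Bᶜ} => S n.1 ω)))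
        = SDMM.CMI p (fun ω => (fun n : {x // x ∈ B} => A 𝒦₀ n.1 ω))
          (fun ω => (fun k => W k ω))
          (fun ω => ((fun n : {x // x ∈ B} => Q 𝒦₀ n.1 ω), (fun n : {x // x ∈ Bᶜ} => S n.1 ω))) :=
      SDMM.CMI_symm hp _ _ _
    have chain3 : SDMM.CMI p (fun ω => (fun n : {x // x ∈ B} => A 𝒦₀ n.1 ω))
        (fun ω => (fun k => W k ω))
        (fun ω => ((fun n : {x // x ∈ B} => Q 𝒦₀ n.1 ω), (fun n : {x // x ∈ Bᶜ} => S n.1 ω)))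
        ≤ SDMM.Hc p (fun ω => (fun n : {x // x ∈ B} => A 𝒦₀ n.1 ω))
          (fun ω => ((fun n : {x // x ∈ B} => Q 𝒦₀ n.1 ω), (fun n : {x // x ∈ Bᶜ} => S n.1 ω))) := by
      have e := SDMM.CMI_eq (p := p)
        (X := fun ω => (fun n : {x // x ∈ B} => A 𝒦₀ n.1 ω))
        (Z := fun ω => (fun k => W k ω))
        (Y := fun ω => ((fun n : {x // x ∈ B} => Q 𝒦₀ n.1 ω), (fun n : {x // x ∈ Bᶜ} => S n.1 ω)))
      have h0 := SDMM.Hc_nonneg hp (fun ω => (fun n : {x // x ∈ B} => A 𝒦₀ n.1 ω))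
        (fun ω => ((fun k => W k ω),
          ((fun n : {x // x ∈ B} => Q 𝒦₀ n.1 ω), (fun n : {x // x ∈ Bᶜ} => S n.1 ω))))
      linarith
    have chain4 := SDMM.Hc_le_H hp (fun ω => (fun n : {x // x ∈ B} => A 𝒦₀ n.1 ω))
      (fun ω => ((fun n : {x // x ∈ B} => Q 𝒦₀ n.1 ω), (fun n : {x // x ∈ Bᶜ} => S n.1 ω)))
    have chain5 := SDMM.H_pi_le hp B 𝒜 (fun n => A 𝒦₀ n)
    have chain6 : ∑ n ∈ B, SDMM.H p (A 𝒦₀ n) ≤ ∑ n ∈ B, Dl n :=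
      Finset.sum_le_sum fun n _ => hD 𝒦₀ h𝒦₀ n
    linarith
  -- double counting over all m-subsets
  have hsum : ((N.choose m : ℕ) : ℝ) * ((K : ℝ) * ℓ)
      ≤ (((N-1).choose (m-1) : ℕ) : ℝ) * ∑ n, Dl n := by
    have h1 : ∀ B ∈ Finset.powersetCard m (Finset.univ : Finset (Fin N)),
        (K : ℝ) * ℓ ≤ ∑ n ∈ B, Dl n := fun B hB =>
      keyB B (Finset.mem_powersetCard.mp hB).2
    have h2 : ((N.choose m : ℕ) : ℝ) * ((K : ℝ) * ℓ)
        ≤ ∑ B ∈ Finset.powersetCard m (Finset.univ : Finset (Fin N)), ∑ n ∈ B, Dl n := by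
      calc ((N.choose m : ℕ) : ℝ) * ((K : ℝ) * ℓ)
          = ∑ _B ∈ Finset.powersetCard m (Finset.univ : Finset (Fin N)), (K : ℝ) * ℓ := by
            rw [Finset.sum_const, Finset.card_powersetCard, Finset.card_univ, Fintype.card_fin,
              nsmul_eq_mul]
        _ ≤ _ := Finset.sum_le_sum h1
    have h3 : ∑ B ∈ Finset.powersetCard m (Finset.univ : Finset (Fin N)), ∑ n ∈ B, Dl n
        = (((N-1).choose (m-1) : ℕ) : ℝ) * ∑ n, Dl n := by
      have e1 : ∀ B ∈ Finset.powersetCard m (Finset.univ : Finset (Fin N)),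
          ∑ n ∈ B, Dl n = ∑ n, if n ∈ B then Dl n else 0 := by
        intro B _
        rw [Finset.sum_ite_mem, Finset.univ_inter]
      rw [Finset.sum_congr rfl e1, Finset.sum_comm]
      have e2 : ∀ n : Fin N, ∑ B ∈ Finset.powersetCard m (Finset.univ : Finset (Fin N)),
          (if n ∈ B then Dl n else 0) = (((N-1).choose (m-1) : ℕ) : ℝ) * Dl n := by
        intro n
        rw [← Finset.sum_filter, Finset.sum_const, count_aux N m hm1 hmN n, nsmul_eq_mul]
      rw [Finset.sum_congr rfl fun n _ => e2 n, ← Finset.mul_sum]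
    rw [h3] at h2
    exact h2
  have hid : (N : ℝ) * (((N-1).choose (m-1) : ℕ) : ℝ) = ((N.choose m : ℕ) : ℝ) * (m : ℝ) := by
    have := Nat.add_one_mul_choose_eq (N-1) (m-1)
    have hN1 : (N-1) + 1 = N := by omega
    have hm1' : (m-1) + 1 = m := by omega
    rw [hN1, hm1'] at this
    exact_mod_cast congrArg (Nat.cast : ℕ → ℝ) this
  have hcpos : (0 : ℝ) < ((N.choose m : ℕ) : ℝ) := by
    exact_mod_cast Nat.choose_pos hmN
  have hmcast : ((m : ℕ) : ℝ) = (N : ℝ) - (X : ℝ) := by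
    rw [hmdef]; push_cast [Nat.cast_sub hXN']; ring
  have hNX : (0 : ℝ) < (N : ℝ) - (X : ℝ) := by
    have : (X : ℝ) < (N : ℝ) := by exact_mod_cast hXN
    linarith
  have hNpos : (0 : ℝ) < (N : ℝ) := by
    have : (0:ℕ) < N := by omega
    exact_mod_cast this
  have key2 : (N:ℝ) * ((K:ℝ)*ℓ) ≤ (m:ℝ) * ∑ n, Dl n := by
    have h1 : (N:ℝ) * (((N.choose m : ℕ) : ℝ) * ((K : ℝ) * ℓ))
        ≤ (N:ℝ) * ((((N-1).choose (m-1) : ℕ) : ℝ) * ∑ n, Dl n) :=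
      mul_le_mul_of_nonneg_left hsum hNpos.le
    have h2 : (N:ℝ) * ((((N-1).choose (m-1) : ℕ) : ℝ) * ∑ n, Dl n)
        = ((N.choose m : ℕ) : ℝ) * ((m:ℝ) * ∑ n, Dl n) := by
      rw [← mul_assoc, hid]; ring
    have h3 : (N:ℝ) * (((N.choose m : ℕ) : ℝ) * ((K : ℝ) * ℓ))
        = ((N.choose m : ℕ) : ℝ) * ((N:ℝ) * ((K : ℝ) * ℓ)) := by ring
    rw [h2, h3] at h1
    exact le_of_mul_le_mul_left h1 hcpos
  have part1 : (N : ℝ) / ((N : ℝ) - (X : ℝ)) * ((K : ℝ) * ℓ) ≤ ∑ n, Dl n := by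
    rw [div_mul_eq_mul_div, div_le_iff₀ hNX, ← hmcast]
    nlinarith [key2]
  refine ⟨part1, ?_⟩
  have hKpos : (0 : ℝ) < (K : ℝ) := by exact_mod_cast Nat.lt_of_lt_of_le hM hMK
  have hMpos : (0 : ℝ) ≤ (M : ℝ) := by positivity
  have hDpos : (0 : ℝ) < ∑ n, Dl n := by
    have hlow : (0:ℝ) < (N : ℝ) / ((N : ℝ) - (X : ℝ)) * ((K : ℝ) * ℓ) := by positivity
    linarith
  rw [div_le_div_iff₀ hDpos (by positivity)]
  -- M ℓ (K N) ≤ M (N - X) D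
  have hstep : (N : ℝ) * ((K : ℝ) * ℓ) ≤ ((N : ℝ) - (X : ℝ)) * ∑ n, Dl n := by
    have := part1
    rw [div_mul_eq_mul_div, div_le_iff₀ hNX] at this
    linarith [this]
  nlinarith [mul_le_mul_of_nonneg_left hstep hMpos]
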